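/- arXiv:1202.4205 — 3 statements merged into one kernel-verified Lean document; each statement's English description precedes it below -/
import Mathlib

section
/- If 0 < J ≤ 1, then for every t > 0, the only solution m ∈ [−1,1] of the equation a^J(m) = m·coth(2t) is m = 0. -/
open Real

/-!
For `m ≠ 0` the right-hand side `m · coth(2t)` exceeds `m` in absolute value, in the direction
of `m`, while `a^J(m)` does not: with `s = sinh(Jm)`, `c = cosh(Jm)` the double-angle formulas
give `m · a^J(m) = m² - 2c · (m² c - m s)`, and `m s ≤ J m² c ≤ m² c` because `y sinh y ≤ y² cosh y`
(that is, `tanh y ≤ y` for `y ≥ 0`). Hence `m² coth(2t) = m · a^J(m) ≤ m²`, forcing `m = 0`.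
-/

namespace Real

theorem sinh_le_mul_cosh {x : ℝ} (hx : 0 ≤ x) : sinh x ≤ x * cosh x := by
  have hmono : MonotoneOn (fun y : ℝ => y * cosh y - sinh y) (Set.Ici 0) := by
    refine monotoneOn_of_deriv_nonneg (convex_Ici 0) (by fun_prop) (by fun_prop) fun y hy => ?_
    rw [interior_Ici, Set.mem_Ioi] at hy
    have hderiv : deriv (fun y : ℝ => y * cosh y - sinh y) y = y * sinh y := by
      rw [deriv_fun_sub (by fun_prop) (by fun_prop), deriv_fun_mul (by fun_prop) (by fun_prop)]
      simp
    rw [hderiv]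
    exact mul_nonneg hy.le (sinh_nonneg_iff.mpr hy.le)
  simpa using hmono Set.self_mem_Ici hx hx

theorem mul_sinh_le_sq_mul_cosh (y : ℝ) : y * sinh y ≤ y ^ 2 * cosh y := by
  rcases le_total 0 y with hy | hy
  · nlinarith [sinh_le_mul_cosh hy]
  · nlinarith [sinh_le_mul_cosh (neg_nonneg.mpr hy), sinh_neg y, cosh_neg y]

theorem one_lt_cosh_div_sinh {x : ℝ} (hx : 0 < x) : 1 < cosh x / sinh x := by
  have hs : 0 < sinh x := sinh_pos_iff.mpr hx
  rw [one_lt_div hs]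
  nlinarith [cosh_sq x, cosh_pos x]

end Real

theorem mul_sinh_two_mul_sub_mul_cosh_two_mul_le_sq {J : ℝ} (hJ0 : 0 < J) (hJ : J ≤ 1) (m : ℝ) :
    m * (sinh (2 * J * m) - m * cosh (2 * J * m)) ≤ m ^ 2 := by
  set s := sinh (J * m)
  set c := cosh (J * m)
  have hsinh : sinh (2 * J * m) = 2 * s * c := by rw [mul_assoc, sinh_two_mul]
  have hcosh : cosh (2 * J * m) = 2 * c ^ 2 - 1 := by
    rw [mul_assoc, cosh_two_mul, sinh_sq]; ring
  have hms : m * s ≤ m ^ 2 * c := by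
    have hJm : J * (m * s) ≤ J * (J * m ^ 2 * c) := by
      nlinarith [mul_sinh_le_sq_mul_cosh (J * m)]
    have hc : 0 ≤ m ^ 2 * c := by positivity
    nlinarith [le_of_mul_le_mul_left hJm hJ0]
  rw [hsinh, hcosh]
  nlinarith [cosh_pos (J * m)]

theorem unique_zero_solution_general (J : ℝ) (hJ0 : 0 < J) (hJ : J ≤ 1) (t : ℝ) (ht : 0 < t)
    (m : ℝ)
    (heq : Real.sinh (2*J*m) - m * Real.cosh (2*J*m)
      = m * (Real.cosh (2*t) / Real.sinh (2*t))) :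
    m = 0 := by
  have hbound := mul_sinh_two_mul_sub_mul_cosh_two_mul_le_sq hJ0 hJ m
  have hcoth := one_lt_cosh_div_sinh (by linarith : (0 : ℝ) < 2 * t)
  rw [heq] at hbound
  have hsq : m ^ 2 * (cosh (2 * t) / sinh (2 * t) - 1) ≤ 0 := by linarith
  exact pow_eq_zero_iff two_ne_zero |>.mp <|
    le_antisymm (nonpos_of_mul_nonpos_left hsq (sub_pos.mpr hcoth)) (sq_nonneg m)

theorem unique_zero_solution (J : ℝ) (hJ0 : 0 < J) (hJ : J ≤ 1) (t : ℝ) (ht : 0 < t)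
    (m : ℝ) (hm : m ∈ Set.Icc (-1 : ℝ) 1)
    (heq : Real.sinh (2*J*m) - m * Real.cosh (2*J*m)
      = m * (Real.cosh (2*t) / Real.sinh (2*t))) :
    m = 0 :=
  unique_zero_solution_general J hJ0 hJ t ht m heq
end

section
/- The Lagrangian L(m, v) := −(1/2)·√(4(1−m²)+v²) + (v/2)·log((√(4(1−m²)+v²)+v)/(2(1−m))) + 1 satisfies L(m, v) ≥ 0 for all m ∈ (−1,1) and v ∈ ℝ, with L(m, v) = 0 if and only if v = −2m. -/
set_option maxHeartbeats 1000000


open Real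

theorem Lagrangian_nonneg (m v : ℝ) (hm : m ∈ Set.Ioo (-1 : ℝ) 1) :
    0 ≤ -(1/2) * Real.sqrt (4*(1-m^2) + v^2)
        + (v/2) * Real.log ((Real.sqrt (4*(1-m^2) + v^2) + v) / (2*(1-m))) + 1
    ∧ (-(1/2) * Real.sqrt (4*(1-m^2) + v^2)
        + (v/2) * Real.log ((Real.sqrt (4*(1-m^2) + v^2) + v) / (2*(1-m))) + 1 = 0
      ↔ v = -2*m) := by
  obtain ⟨hm1, hm2⟩ := hm
  set s := Real.sqrt (4*(1-m^2) + v^2) with hs_def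
  set a := 1 - m with ha_def
  set b := 1 + m with hb_def
  have ha : 0 < a := by simp only [ha_def]; linarith
  have hb : 0 < b := by simp only [hb_def]; linarith
  have hnn : (0:ℝ) ≤ 4*(1-m^2) + v^2 := by nlinarith [sq_nonneg v]
  have hs_sq : s^2 = 4*a*b + v^2 := by
    rw [hs_def, Real.sq_sqrt hnn]; ring
  have hs_nonneg : 0 ≤ s := Real.sqrt_nonneg _
  have hsv : 0 < s + v := by nlinarith [sq_nonneg (s + v)]
  have hsv' : 0 < s - v := by nlinarith [sq_nonneg (s - v)]
  set t := (s + v) / (2 * a) with ht_def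
  have ht : 0 < t := by positivity
  have hb2 : b = 2 - a := by rw [ha_def, hb_def]; ring
  clear_value s a b t
  have hvt : v = a * t - b / t := by
    rw [ht_def]; field_simp; nlinarith [hs_sq]
  have hst : s = a * t + b / t := by
    rw [ht_def]; field_simp; nlinarith [hs_sq]
  have hkey : -(1/2) * s + (v/2) * Real.log t + 1
      = (a/2) * (t * Real.log t - t + 1) + (b/(2*t)) * (t - 1 - Real.log t) := by
    rw [hvt, hst, hb2]
    field_simp
    ring
  have hA : 0 ≤ t * Real.log t - t + 1 := by
    have h := Real.log_le_sub_one_of_pos (show (0:ℝ) < t⁻¹ by positivity)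
    rw [Real.log_inv] at h
    have := mul_le_mul_of_nonneg_left h ht.le
    rw [mul_sub, mul_inv_cancel₀ ht.ne'] at this
    nlinarith
  have hB : 0 ≤ t - 1 - Real.log t := by
    nlinarith [Real.log_le_sub_one_of_pos ht]
  have hnonneg : 0 ≤ -(1/2) * s + (v/2) * Real.log t + 1 := by
    rw [hkey]
    have c1 : (0:ℝ) < a/2 := by positivity
    have c2 : (0:ℝ) < b/(2*t) := by positivity
    nlinarith
  refine ⟨hnonneg, ?_, ?_⟩
  · intro h0
    rw [hkey] at h0
    have c1 : (0:ℝ) < a/2 := by positivity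
    have c2 : (0:ℝ) < b/(2*t) := by positivity
    have ht1 : t = 1 := by
      by_contra hne
      have hBlt : 0 < t - 1 - Real.log t := by
        nlinarith [Real.log_lt_sub_one_of_pos ht hne]
      nlinarith
    have hsval : s + v = 2 * a := by
      rw [ht_def] at ht1
      field_simp at ht1
      linarith
    have : s = 2 * a - v := by linarith
    rw [ha_def] at this hsval
    rw [ha_def, hb_def] at hs_sq
    nlinarith [hs_sq, this]
  · intro hv
    subst hv
    have h4 : 4*(1-m^2) + (-2*m)^2 = 4 := by ring
    have hs2 : s = 2 := by
      rw [hs_def, h4]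
      rw [show (4:ℝ) = 2^2 by norm_num, Real.sqrt_sq (by norm_num)]
    have ht1 : t = 1 := by
      rw [ht_def, hs2, ha_def,
        div_eq_one_iff_eq (by nlinarith : (2:ℝ) * (1 - m) ≠ 0)]
      ring
    rw [hs2, ht1, Real.log_one]
    ring
end

section
/- For 1 < J ≤ 3/2 and t > Ψ_c(J) = (1/2)·arcoth(2J−1), the equation a^J(m) = m·coth(2t) has exactly three solutions in (−1,1): 0, m̂(t) and −m̂(t) with m̂(t) > 0; moreover for 0 < t ≤ Ψ_c(J) the only solution is m = 0. -/
open Real Set Topology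

/-! On `[0, ∞)` the function `a^J` is strictly concave: at `x = 2Jm` its second derivative is
`2J ((2J - 2) sinh x - x cosh x)`, negative because `2J - 2 ≤ 1` and `tanh x < x`. It vanishes at
`0` with slope `2J - 1` there, so the line `m ↦ c m` meets its graph at some `m > 0` iff
`c < 2J - 1`, and then at exactly one such `m`, which lies in `(0, 1)` because `a^J(1) < 0 ≤ c`.
Oddness of `a^J` accounts for the negative solutions, and for `c = coth (2t)` the condition
`c < 2J - 1` reads `t > Ψ_c(J)`. -/

lemma sinh_lt_mul_cosh {x : ℝ} (hx : 0 < x) : sinh x < x * cosh x := by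
  have hderiv (y : ℝ) : HasDerivAt (fun y => y * cosh y - sinh y) (y * sinh y) y :=
    (((hasDerivAt_id' y).mul (hasDerivAt_cosh y)).sub (hasDerivAt_sinh y)).congr_deriv (by ring)
  have hmono : StrictMonoOn (fun y => y * cosh y - sinh y) (Ici 0) := by
    refine strictMonoOn_of_deriv_pos (convex_Ici 0) (by fun_prop) fun y hy => ?_
    rw [interior_Ici, mem_Ioi] at hy
    rw [(hderiv y).deriv]
    exact mul_pos hy (sinh_pos_iff.2 hy)
  simpa using hmono self_mem_Ici hx.le hx

lemma le_cosh_div_sinh_iff {k s : ℝ} (hk : 1 < k) (hs : 0 < s) :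
    k ≤ cosh s / sinh s ↔ s ≤ 1 / 2 * log ((k + 1) / (k - 1)) := by
  have hE : 1 < exp (2 * s) := one_lt_exp_iff.2 (by linarith)
  have hcoth : cosh s / sinh s = (exp (2 * s) + 1) / (exp (2 * s) - 1) := by
    rw [cosh_eq, sinh_eq, exp_neg, show 2 * s = s + s by ring, exp_add]
    have : exp s ≠ 0 := (exp_pos s).ne'
    field_simp
  have hlog : s ≤ 1 / 2 * log ((k + 1) / (k - 1)) ↔ exp (2 * s) ≤ (k + 1) / (k - 1) := by
    rw [← le_log_iff_exp_le (div_pos (by linarith) (by linarith))]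
    constructor <;> intro <;> linarith
  rw [hlog, hcoth, le_div_iff₀ (by linarith), le_div_iff₀ (by linarith)]
  constructor <;> intro <;> linarith

namespace StrictConcaveOn

variable {f : ℝ → ℝ}

lemma neg_of_hasDerivAt_nonpos (hf : StrictConcaveOn ℝ (Ici 0) f) (h0 : f 0 = 0) {d : ℝ}
    (hd : HasDerivAt f d 0) (hd0 : d ≤ 0) {x : ℝ} (hx : 0 < x) : f x < 0 := by
  have hslope := hf.slope_lt_of_hasDerivAt self_mem_Ici hx.le hx hd
  rw [slope_def_field, h0, sub_zero, sub_zero, div_lt_iff₀ hx] at hslope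
  nlinarith

lemma eq_of_apply_eq_zero (hf : StrictConcaveOn ℝ (Ici 0) f) (h0 : f 0 = 0) {x y : ℝ}
    (hx : 0 < x) (hy : 0 < y) (hfx : f x = 0) (hfy : f y = 0) : x = y := by
  by_contra hne
  wlog hxy : x < y generalizing x y
  · exact this hy hx hfy hfx (Ne.symm hne) (lt_of_le_of_ne (not_lt.1 hxy) (Ne.symm hne))
  have := hf.slope_anti_adjacent self_mem_Ici hy.le hx hxy
  simp [h0, hfx, hfy] at this

end StrictConcaveOn

lemma exists_mem_Ioo_eq_zero_of_hasDerivAt_pos {f : ℝ → ℝ} {b d : ℝ} (hb : 0 < b)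
    (hf : ContinuousOn f (Icc 0 b)) (h0 : f 0 = 0) (hd : HasDerivAt f d 0) (hd0 : 0 < d)
    (hfb : f b < 0) : ∃ m ∈ Ioo 0 b, f m = 0 := by
  have hpos : ∀ᶠ x in 𝓝[>] 0, 0 < f x := by
    filter_upwards [hd.tendsto_slope_zero_right.eventually (lt_mem_nhds hd0), self_mem_nhdsWithin]
      with x hx (hx0 : 0 < x)
    simpa [h0, hx0] using hx
  obtain ⟨ε, hfε, hε⟩ := (hpos.and (Ioo_mem_nhdsGT hb)).exists
  obtain ⟨m, hm, hfm⟩ := intermediate_value_Ioo' hε.2.le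
    (hf.mono (Icc_subset_Icc hε.1.le le_rfl)) ⟨hfb, hfε⟩
  exact ⟨m, ⟨hε.1.trans hm.1, hm.2⟩, hfm⟩

noncomputable def aJ (J m : ℝ) : ℝ := sinh (2 * J * m) - m * cosh (2 * J * m)

section aJ

variable (J : ℝ)

@[fun_prop]
lemma continuous_aJ : Continuous (aJ J) := by
  unfold aJ; fun_prop

lemma aJ_neg (m : ℝ) : aJ J (-m) = -aJ J m := by
  simp only [aJ, mul_neg, sinh_neg, cosh_neg]
  ring

@[simp]
lemma aJ_zero : aJ J 0 = 0 := by simp [aJ]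

lemma aJ_one_neg : aJ J 1 < 0 := by
  simp only [aJ, mul_one, one_mul, sinh_sub_cosh, neg_lt_zero]
  exact exp_pos _

lemma hasDerivAt_aJ (m : ℝ) :
    HasDerivAt (aJ J) ((2 * J - 1) * cosh (2 * J * m) - 2 * J * m * sinh (2 * J * m)) m := by
  have hlin : HasDerivAt (fun m => 2 * J * m) (2 * J) m := by
    simpa using (hasDerivAt_id m).const_mul (2 * J)
  exact (hlin.sinh.sub ((hasDerivAt_id' m).mul hlin.cosh)).congr_deriv (by ring)

lemma hasDerivAt_aJ_zero : HasDerivAt (aJ J) (2 * J - 1) 0 := by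
  simpa using hasDerivAt_aJ J 0

lemma hasDerivAt_deriv_aJ (m : ℝ) :
    HasDerivAt (deriv (aJ J))
      (2 * J * ((2 * J - 2) * sinh (2 * J * m) - 2 * J * m * cosh (2 * J * m))) m := by
  have hlin : HasDerivAt (fun m => 2 * J * m) (2 * J) m := by
    simpa using (hasDerivAt_id m).const_mul (2 * J)
  rw [show deriv (aJ J) = _ from funext fun m => (hasDerivAt_aJ J m).deriv]
  exact ((hlin.cosh.const_mul (2 * J - 1)).sub (hlin.mul hlin.sinh)).congr_deriv (by ring)

variable {J}

lemma strictConcaveOn_aJ (hJ0 : 0 < J) (hJ : J ≤ 3 / 2) : StrictConcaveOn ℝ (Ici 0) (aJ J) := by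
  refine strictConcaveOn_of_deriv2_neg (convex_Ici 0) (continuous_aJ J).continuousOn
    fun x hx => ?_
  rw [interior_Ici, mem_Ioi] at hx
  rw [Function.iterate_succ_apply, Function.iterate_one, (hasDerivAt_deriv_aJ J x).deriv]
  have hy : 0 < 2 * J * x := by positivity
  have hsinh := sinh_pos_iff.2 hy
  have := sinh_lt_mul_cosh hy
  exact mul_neg_of_pos_of_neg (by positivity) (by nlinarith)

lemma strictConcaveOn_aJ_sub_mul (hJ0 : 0 < J) (hJ : J ≤ 3 / 2) (c : ℝ) :
    StrictConcaveOn ℝ (Ici 0) fun m => aJ J m - m * c :=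
  (strictConcaveOn_aJ hJ0 hJ).sub_convexOn ((LinearMap.mulRight ℝ c).convexOn (convex_Ici 0))

theorem eq_zero_of_aJ_eq_mul (hJ0 : 0 < J) (hJ : J ≤ 3 / 2) {c : ℝ} (hc : 2 * J - 1 ≤ c)
    {m : ℝ} (h : aJ J m = m * c) : m = 0 := by
  have hneg {x : ℝ} (hx : 0 < x) : aJ J x - x * c < 0 :=
    (strictConcaveOn_aJ_sub_mul hJ0 hJ c).neg_of_hasDerivAt_nonpos (by simp)
      ((hasDerivAt_aJ_zero J).sub (hasDerivAt_mul_const c)) (by linarith) hx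
  rcases lt_trichotomy m 0 with hm | hm | hm
  · linarith [hneg (neg_pos.2 hm), aJ_neg J m]
  · exact hm
  · linarith [hneg hm]

theorem exists_setOf_aJ_eq_mul (hJ0 : 0 < J) (hJ : J ≤ 3 / 2) {c : ℝ} (hc0 : 0 ≤ c)
    (hc : c < 2 * J - 1) :
    ∃ mh, 0 < mh ∧ {m : ℝ | m ∈ Ioo (-1) 1 ∧ aJ J m = m * c} = {0, mh, -mh} := by
  have hg := strictConcaveOn_aJ_sub_mul hJ0 hJ c
  obtain ⟨mh, hmh, hgmh⟩ := exists_mem_Ioo_eq_zero_of_hasDerivAt_pos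
    (f := fun m => aJ J m - m * c) one_pos (by fun_prop)
    (by simp) ((hasDerivAt_aJ_zero J).sub (hasDerivAt_mul_const c)) (by linarith)
    (by linarith [aJ_one_neg J])
  have hmh' : aJ J mh = mh * c := sub_eq_zero.1 hgmh
  have huniq {x : ℝ} (hx : 0 < x) (h : aJ J x = x * c) : x = mh :=
    hg.eq_of_apply_eq_zero (by simp) hx hmh.1 (sub_eq_zero.2 h) hgmh
  refine ⟨mh, hmh.1, ?_⟩
  ext m
  simp only [mem_ofPred_eq, mem_insert_iff, mem_singleton_iff]
  constructor
  · rintro ⟨-, h⟩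
    rcases lt_trichotomy m 0 with hm | rfl | hm
    · right; right
      have := huniq (neg_pos.2 hm) (by rw [aJ_neg, h]; ring)
      linarith
    · left; rfl
    · right; left
      exact huniq hm h
  · rintro (rfl | rfl | rfl)
    · simp
    · exact ⟨⟨by linarith [hmh.1], hmh.2⟩, hmh'⟩
    · exact ⟨⟨by linarith [hmh.2], by linarith [hmh.1]⟩, by rw [aJ_neg, hmh']; ring⟩

end aJ

theorem three_solutions (J : ℝ) (hJ1 : 1 < J) (hJ2 : J ≤ 3/2) :
    (∀ t : ℝ, 0 < t → t ≤ (1/2) * ((1/2) * Real.log ((2*J - 1 + 1)/(2*J - 1 - 1))) →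
      ∀ m ∈ Set.Ioo (-1 : ℝ) 1,
        Real.sinh (2*J*m) - m * Real.cosh (2*J*m)
          = m * (Real.cosh (2*t) / Real.sinh (2*t)) → m = 0)
    ∧ (∀ t : ℝ, (1/2) * ((1/2) * Real.log ((2*J - 1 + 1)/(2*J - 1 - 1))) < t →
        ∃ mh : ℝ, 0 < mh ∧
          {m : ℝ | m ∈ Set.Ioo (-1 : ℝ) 1 ∧
            Real.sinh (2*J*m) - m * Real.cosh (2*J*m)
              = m * (Real.cosh (2*t) / Real.sinh (2*t))}
          = {0, mh, -mh}) := by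
  have hJ0 : 0 < J := by linarith
  have hk : 1 < 2 * J - 1 := by linarith
  refine ⟨fun t ht hle m _ h => ?_, fun t ht => ?_⟩
  · exact eq_zero_of_aJ_eq_mul hJ0 hJ2
      ((le_cosh_div_sinh_iff hk (by linarith)).2 (by linarith)) h
  · have hlog : 0 < log ((2 * J - 1 + 1) / (2 * J - 1 - 1)) :=
      log_pos ((one_lt_div (by linarith)).2 (by linarith))
    have hs : 0 < 2 * t := by linarith
    have hc : cosh (2 * t) / sinh (2 * t) < 2 * J - 1 :=
      lt_of_not_ge fun h => by linarith [(le_cosh_div_sinh_iff hk hs).1 h]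
    exact exists_setOf_aJ_eq_mul hJ0 hJ2 (div_pos (cosh_pos _) (sinh_pos_iff.2 hs)).le hc
end
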